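/- Let q ≠ 0 and r be real numbers. For every nonnegative integer n, B_n^q(r) = ∑_{k=0}^n ∑_{j=0}^k k! W(n,k) W(k,j) ĉ_j^q(−r). -/

import Mathlib

/-!
Substituting `x = z / q` in the defining identity of `W` gives
`∑_j W(k,j) (z|q)_j = (z + r)^k`. Integrating this at `z = -x - r` over `[0, 1]` yields
`∑_j W(k,j) ĉ_j^q(-r) = ∫_0^1 (-x)^k dx = (-1)^k / (k + 1)`, and substituting this into
the definition of `B_n^q(r)` gives the double sum.
-/

/-- The falling factorial `(x)_k = x(x-1)⋯(x-k+1)`. -/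
noncomputable def fallFac (x : ℝ) (k : ℕ) : ℝ := ∏ i ∈ Finset.range k, (x - i)

/-- The generalized falling factorial `(x|q)_k = x(x-q)⋯(x-(k-1)q)`. -/
noncomputable def genFallFac (q x : ℝ) (k : ℕ) : ℝ := ∏ i ∈ Finset.range k, (x - i * q)

/-- The Cauchy polynomials with a `q` parameter of the second kind:
`ĉ_n^q(z) = ∫_0^1 (−x + z | q)_n dx`. -/
noncomputable def cauchySecond (q z : ℝ) (n : ℕ) : ℝ := ∫ x in (0:ℝ)..1, genFallFac q (-x + z) n

lemma genFallFac_eq_pow_mul_fallFac {q : ℝ} (hq : q ≠ 0) (x : ℝ) (k : ℕ) :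
    genFallFac q x k = q ^ k * fallFac (x / q) k := by
  have hcard : q ^ k = q ^ (Finset.range k).card := by rw [Finset.card_range]
  rw [genFallFac, fallFac, hcard, Finset.pow_card_mul_prod]
  refine Finset.prod_congr rfl fun i _ => ?_
  field_simp

lemma continuous_genFallFac (q : ℝ) (k : ℕ) : Continuous fun x => genFallFac q x k :=
  continuous_finsetProd _ fun _ _ => by fun_prop

lemma integral_neg_pow_zero_one (k : ℕ) :
    ∫ x in (0:ℝ)..1, (-x) ^ k = (-1) ^ k / ((k : ℝ) + 1) := by
  rw [funext fun x : ℝ => neg_pow x k, intervalIntegral.integral_const_mul, integral_pow]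
  ring

section Whitney

variable {q r : ℝ} {W : ℕ → ℕ → ℝ} {k : ℕ}

lemma sum_mul_genFallFac_eq_pow (hq : q ≠ 0)
    (hW : ∀ x : ℝ, (q * x + r) ^ k = ∑ j ∈ Finset.range (k + 1), q ^ j * W k j * fallFac x j)
    (z : ℝ) :
    ∑ j ∈ Finset.range (k + 1), W k j * genFallFac q z j = (z + r) ^ k := by
  have hz : q * (z / q) + r = z + r := by field_simp
  rw [← hz, hW]
  refine Finset.sum_congr rfl fun j _ => ?_
  rw [genFallFac_eq_pow_mul_fallFac hq]
  ring

lemma sum_mul_cauchySecond_neg_eq (hq : q ≠ 0)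
    (hW : ∀ x : ℝ, (q * x + r) ^ k = ∑ j ∈ Finset.range (k + 1), q ^ j * W k j * fallFac x j) :
    ∑ j ∈ Finset.range (k + 1), W k j * cauchySecond q (-r) j = (-1) ^ k / ((k : ℝ) + 1) := by
  have hintegrable : ∀ j, IntervalIntegrable (fun x => W k j * genFallFac q (-x + -r) j)
      MeasureTheory.volume 0 1 := fun j =>
    ((continuous_genFallFac q j).comp (by fun_prop : Continuous fun x : ℝ => -x + -r))
      |>.const_mul _ |>.intervalIntegrable 0 1
  calc ∑ j ∈ Finset.range (k + 1), W k j * cauchySecond q (-r) j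
      = ∫ x in (0:ℝ)..1, ∑ j ∈ Finset.range (k + 1), W k j * genFallFac q (-x + -r) j := by
        rw [intervalIntegral.integral_finsetSum fun j _ => hintegrable j]
        simp only [cauchySecond, intervalIntegral.integral_const_mul]
    _ = ∫ x in (0:ℝ)..1, (-x) ^ k := by
        simp only [sum_mul_genFallFac_eq_pow hq hW, neg_add_cancel_right]
    _ = (-1) ^ k / ((k : ℝ) + 1) := integral_neg_pow_zero_one k

end Whitney

theorem bernoulli_q_eq_double_sum_cauchySecond_general (q r : ℝ) (hq : q ≠ 0)
    (W : ℕ → ℕ → ℝ)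
    (hW : ∀ n : ℕ, ∀ x : ℝ, (q * x + r) ^ n =
      ∑ k ∈ Finset.range (n + 1), q ^ k * W n k * fallFac x k)
    (B : ℕ → ℝ)
    (hB : ∀ n, B n = ∑ k ∈ Finset.range (n + 1),
      (-1 : ℝ) ^ k * ((k.factorial : ℝ) / ((k : ℝ) + 1)) * W n k)
    (n : ℕ) :
    B n = ∑ k ∈ Finset.range (n + 1), ∑ j ∈ Finset.range (k + 1),
      (k.factorial : ℝ) * W n k * W k j * cauchySecond q (-r) j := by
  rw [hB n]
  refine Finset.sum_congr rfl fun k _ => ?_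
  have hinner := sum_mul_cauchySecond_neg_eq hq (hW k)
  calc (-1 : ℝ) ^ k * ((k.factorial : ℝ) / ((k : ℝ) + 1)) * W n k
      = (k.factorial : ℝ) * W n k * ∑ j ∈ Finset.range (k + 1), W k j * cauchySecond q (-r) j := by
        rw [hinner]; ring
    _ = _ := by
        rw [Finset.mul_sum]
        exact Finset.sum_congr rfl fun j _ => by ring

/-- `B_n^q(r) = ∑_{k=0}^n ∑_{j=0}^k k! W(n,k) W(k,j) ĉ_j^q(−r)`. -/
theorem bernoulli_q_eq_double_sum_cauchySecond (q r : ℝ) (hq : q ≠ 0)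
    (W : ℕ → ℕ → ℝ)
    (hW0 : ∀ n k, n < k → W n k = 0)
    (hW : ∀ n : ℕ, ∀ x : ℝ, (q * x + r) ^ n =
      ∑ k ∈ Finset.range (n + 1), q ^ k * W n k * fallFac x k)
    (B : ℕ → ℝ)
    (hB : ∀ n, B n = ∑ k ∈ Finset.range (n + 1),
      (-1 : ℝ) ^ k * ((k.factorial : ℝ) / ((k : ℝ) + 1)) * W n k)
    (n : ℕ) :
    B n = ∑ k ∈ Finset.range (n + 1), ∑ j ∈ Finset.range (k + 1),
      (k.factorial : ℝ) * W n k * W k j * cauchySecond q (-r) j :=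
  bernoulli_q_eq_double_sum_cauchySecond_general q r hq W hW B hB n
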